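/- If Λ ⊆ (0,∞)ⁿ is a nonempty convex cone, then the dual norm of ‖·‖_Λ := Ω(·|Λ) is given by ‖β‖_{*,Λ} = sup{ sqrt( (Σᵢ λᵢ βᵢ²) / (Σᵢ λᵢ) ) : λ ∈ Λ }. -/

import Mathlib

/-!
For `l ∈ Λ`, Cauchy–Schwarz with weights `l` and then AM–GM give
`βᵀu ≤ √(∑ lᵢβᵢ² / ∑ lᵢ) · ½ ∑ (uᵢ²/lᵢ + lᵢ)`; taking the infimum over `l` bounds `βᵀu` by
`M · Ω(u)`, where `M` is the right-hand supremum, so the dual norm is at most `M`. Conversely,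
`u = lβ / √(∑ lᵢβᵢ² · ∑ lᵢ)` attains `βᵀu = √(∑ lᵢβᵢ² / ∑ lᵢ)`, and the rescaled `l / ∑ lᵢ ∈ Λ`
witnesses `Ω(u) ≤ 1`, both inequalities being equalities there.
-/

noncomputable def Omega {n : ℕ} (Λ : Set (Fin n → ℝ)) (β : Fin n → ℝ) : ℝ :=
  sInf {t : ℝ | ∃ l ∈ Λ, t = (1/2) * ∑ i, (β i ^ 2 / l i + l i)}

open Finset Real

section Weighted

variable {ι : Type*} [Fintype ι] {l : ι → ℝ}

theorem sq_sum_mul_le_sum_mul_sq_mul_sum_sq_div (hl : ∀ i, 0 < l i) (β u : ι → ℝ) :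
    (∑ i, β i * u i) ^ 2 ≤ (∑ i, l i * β i ^ 2) * ∑ i, u i ^ 2 / l i :=
  sum_sq_le_sum_mul_sum_of_sq_le_mul _
    (fun i _ ↦ mul_nonneg (hl i).le (sq_nonneg _)) (fun i _ ↦ div_nonneg (sq_nonneg _) (hl i).le)
    (fun i _ ↦ le_of_eq (by field_simp [(hl i).ne']))

theorem sum_mul_le_sqrt_div_mul_half_sum (hl : ∀ i, 0 < l i) (β u : ι → ℝ) :
    ∑ i, β i * u i ≤
      √((∑ i, l i * β i ^ 2) / ∑ i, l i) * ((1/2) * ∑ i, (u i ^ 2 / l i + l i)) := by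
  rcases isEmpty_or_nonempty ι with hι | hι
  · simp
  set A := ∑ i, l i * β i ^ 2
  set A' := ∑ i, u i ^ 2 / l i
  set B := ∑ i, l i
  have hB : 0 < B := sum_pos (fun i _ ↦ hl i) univ_nonempty
  have hA : 0 ≤ A := sum_nonneg fun i _ ↦ mul_nonneg (hl i).le (sq_nonneg _)
  have hA' : 0 ≤ A' := sum_nonneg fun i _ ↦ div_nonneg (sq_nonneg _) (hl i).le
  have hAMGM : A * A' ≤ (A / B) * ((A' + B) / 2) ^ 2 := by
    rw [div_mul_eq_mul_div, le_div_iff₀ hB]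
    nlinarith [mul_nonneg hA (sq_nonneg (A' - B))]
  calc ∑ i, β i * u i ≤ √(A * A') :=
        (le_abs_self _).trans (abs_le_sqrt (sq_sum_mul_le_sum_mul_sq_mul_sum_sq_div hl β u))
    _ ≤ √((A / B) * ((A' + B) / 2) ^ 2) := sqrt_le_sqrt hAMGM
    _ = √(A / B) * ((1/2) * ∑ i, (u i ^ 2 / l i + l i)) := by
        rw [sqrt_mul (by positivity), sqrt_sq (by positivity), sum_add_distrib]; ring

theorem sqrt_sum_mul_sq_div_sum_le (hl : ∀ i, 0 ≤ l i) (β : ι → ℝ) :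
    √((∑ i, l i * β i ^ 2) / ∑ i, l i) ≤ √(∑ i, β i ^ 2) := by
  refine sqrt_le_sqrt (div_le_of_le_mul₀ (sum_nonneg fun i _ ↦ hl i)
    (sum_nonneg fun i _ ↦ sq_nonneg _) ?_)
  rw [sum_mul]
  exact sum_le_sum fun i _ ↦ by
    rw [mul_comm]
    exact mul_le_mul_of_nonneg_left (single_le_sum (fun j _ ↦ hl j) (mem_univ i)) (sq_nonneg _)

end Weighted

section Omega

variable {n : ℕ} {Λ : Set (Fin n → ℝ)}

theorem half_sum_sq_div_add_nonneg {l : Fin n → ℝ} (hl : ∀ i, 0 < l i) (u : Fin n → ℝ) :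
    0 ≤ (1/2) * ∑ i, (u i ^ 2 / l i + l i) :=
  mul_nonneg (by norm_num) (sum_nonneg fun i _ ↦
    add_nonneg (div_nonneg (sq_nonneg _) (hl i).le) (hl i).le)

theorem Omega_le (hpos : ∀ l ∈ Λ, ∀ i, 0 < l i) (u : Fin n → ℝ) {l : Fin n → ℝ} (hl : l ∈ Λ) :
    Omega Λ u ≤ (1/2) * ∑ i, (u i ^ 2 / l i + l i) :=
  csInf_le ⟨0, by rintro _ ⟨m, hm, rfl⟩; exact half_sum_sq_div_add_nonneg (hpos m hm) u⟩ ⟨l, hl, rfl⟩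

theorem sum_mul_le_mul_Omega (hne : Λ.Nonempty) (hpos : ∀ l ∈ Λ, ∀ i, 0 < l i)
    {β : Fin n → ℝ} {M : ℝ} (hM : 0 ≤ M)
    (hbound : ∀ l ∈ Λ, √((∑ i, l i * β i ^ 2) / ∑ i, l i) ≤ M) (u : Fin n → ℝ) :
    ∑ i, β i * u i ≤ M * Omega Λ u := by
  obtain ⟨l₀, hl₀⟩ := hne
  rw [Omega, ← smul_eq_mul, ← Real.sInf_smul_of_nonneg hM]
  refine le_csInf ⟨_, Set.smul_mem_smul_set ⟨l₀, hl₀, rfl⟩⟩ ?_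
  rintro _ ⟨_, ⟨l, hl, rfl⟩, rfl⟩
  exact (sum_mul_le_sqrt_div_mul_half_sum (hpos l hl) β u).trans
    (mul_le_mul_of_nonneg_right (hbound l hl) (half_sum_sq_div_add_nonneg (hpos l hl) u))

theorem exists_Omega_le_one_sum_mul_eq (hpos : ∀ l ∈ Λ, ∀ i, 0 < l i)
    (hcone : ∀ l ∈ Λ, ∀ t : ℝ, 0 < t → t • l ∈ Λ) (β : Fin n → ℝ) {l : Fin n → ℝ} (hl : l ∈ Λ) :
    ∃ u, Omega Λ u ≤ 1 ∧ ∑ i, β i * u i = √((∑ i, l i * β i ^ 2) / ∑ i, l i) := by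
  rcases isEmpty_or_nonempty (Fin n) with hn | hn
  · exact ⟨0, (Omega_le hpos 0 hl).trans (by simp), by simp⟩
  set A := ∑ i, l i * β i ^ 2
  set B := ∑ i, l i
  have hli : ∀ i, l i ≠ 0 := fun i ↦ (hpos l hl i).ne'
  have hB : 0 < B := sum_pos (fun i _ ↦ hpos l hl i) univ_nonempty
  have hA : 0 ≤ A := sum_nonneg fun i _ ↦ mul_nonneg (hpos l hl i).le (sq_nonneg _)
  -- `u` is the equality case of Cauchy–Schwarz and `B⁻¹ • l` the one of AM–GM
  refine ⟨fun i ↦ l i * β i / √(A * B), ?_, ?_⟩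
  · have hsq : √(A * B) ^ 2 = A * B := sq_sqrt (by positivity)
    have hterm : ∀ i, (l i * β i / √(A * B)) ^ 2 / (B⁻¹ * l i) = l i * β i ^ 2 / A := by
      intro i
      rw [div_pow, hsq]
      field_simp
    have hsum : (1/2) * ∑ i, ((l i * β i / √(A * B)) ^ 2 / (B⁻¹ • l) i + (B⁻¹ • l) i)
        = (1/2) * (A / A + 1) := by
      simp only [Pi.smul_apply, smul_eq_mul, sum_add_distrib, ← mul_sum]
      rw [sum_congr rfl fun i _ ↦ hterm i, ← sum_div, inv_mul_cancel₀ hB.ne']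
    have h := Omega_le hpos (fun i ↦ l i * β i / √(A * B)) (hcone l hl B⁻¹ (inv_pos.2 hB))
    linarith [div_self_le_one A]
  · calc ∑ i, β i * (l i * β i / √(A * B)) = A / √(A * B) := by
          rw [sum_div]; exact sum_congr rfl fun i _ ↦ by ring
      _ = √(A / B) := by
          rcases hA.eq_or_lt with hA0 | hA0
          · simp [← hA0]
          rw [sqrt_mul hA, sqrt_div hA]
          field_simp
          exact (sq_sqrt hA).symm

end Omega

theorem stmt_6_general (n : ℕ) (Λ : Set (Fin n → ℝ)) (hne : Λ.Nonempty)
    (hpos : ∀ l ∈ Λ, ∀ i, 0 < l i)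
    (hcone : ∀ l ∈ Λ, ∀ t : ℝ, 0 < t → t • l ∈ Λ)
    (β : Fin n → ℝ) :
    sSup {t : ℝ | ∃ u : Fin n → ℝ, Omega Λ u ≤ 1 ∧ t = ∑ i, β i * u i} =
      sSup {t : ℝ | ∃ l ∈ Λ,
        t = Real.sqrt ((∑ i, l i * β i ^ 2) / (∑ i, l i))} := by
  set S := {t : ℝ | ∃ l ∈ Λ, t = √((∑ i, l i * β i ^ 2) / ∑ i, l i)}
  obtain ⟨l₀, hl₀⟩ := hne
  have hS : BddAbove S := ⟨√(∑ i, β i ^ 2), by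
    rintro _ ⟨l, hl, rfl⟩; exact sqrt_sum_mul_sq_div_sum_le (fun i ↦ (hpos l hl i).le) β⟩
  have hle : ∀ l ∈ Λ, √((∑ i, l i * β i ^ 2) / ∑ i, l i) ≤ sSup S :=
    fun l hl ↦ le_csSup hS ⟨l, hl, rfl⟩
  have hM : 0 ≤ sSup S := (sqrt_nonneg _).trans (hle l₀ hl₀)
  have hdual : ∀ u : Fin n → ℝ, Omega Λ u ≤ 1 → ∑ i, β i * u i ≤ sSup S := fun u hu ↦
    (sum_mul_le_mul_Omega ⟨l₀, hl₀⟩ hpos hM hle u).trans (mul_le_of_le_one_right hM hu)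
  obtain ⟨u₀, hu₀, -⟩ := exists_Omega_le_one_sum_mul_eq hpos hcone β hl₀
  refine le_antisymm (csSup_le ⟨_, u₀, hu₀, rfl⟩ ?_) (csSup_le ⟨_, l₀, hl₀, rfl⟩ ?_)
  · rintro _ ⟨u, hu, rfl⟩
    exact hdual u hu
  · rintro _ ⟨l, hl, rfl⟩
    obtain ⟨u, hu, hsum⟩ := exists_Omega_le_one_sum_mul_eq hpos hcone β hl
    exact le_csSup ⟨_, by rintro _ ⟨v, hv, rfl⟩; exact hdual v hv⟩ ⟨u, hu, hsum.symm⟩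

theorem stmt_6 (n : ℕ) (Λ : Set (Fin n → ℝ)) (hne : Λ.Nonempty)
    (hpos : ∀ l ∈ Λ, ∀ i, 0 < l i) (hconv : Convex ℝ Λ)
    (hcone : ∀ l ∈ Λ, ∀ t : ℝ, 0 < t → t • l ∈ Λ)
    (β : Fin n → ℝ) :
    sSup {t : ℝ | ∃ u : Fin n → ℝ, Omega Λ u ≤ 1 ∧ t = ∑ i, β i * u i} =
      sSup {t : ℝ | ∃ l ∈ Λ,
        t = Real.sqrt ((∑ i, l i * β i ^ 2) / (∑ i, l i))} :=
  stmt_6_general n Λ hne hpos hcone β
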